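/- Let G be an n-player safety game on a possibly infinite arena, where player i's objective is Safe(T_i) for a set T_i ⊆ V, and let σ' be a Nash equilibrium from a vertex v_0. Then there exists a Nash equilibrium σ from v_0 in which every strategy is finite-memory with memory size at most max{1, n − |Sat(out(σ', v_0))|} · (|Visit(out(σ', v_0)) ∖ {0}| + 2) (in particular at most n² + 2n), and such that Sat(out(σ', v_0)) ⊆ Sat(out(σ, v_0)). -/

import Mathlib

open scoped ENNReal Classical

/-- An `n`-player arena on a (possibly infinite) directed graph: an edge relation
with no deadlocks, together with an assignment of each vertex to its owner. -/
structure Arena (V : Type) (n : ℕ) where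
  E : V → V → Prop
  owner : V → Fin n
  no_deadlock : ∀ v, ∃ v', E v v'

namespace Arena

variable {V : Type} {n : ℕ}

/-- A play: an infinite sequence of vertices following edges. -/
def IsPlay (A : Arena V n) (π : ℕ → V) : Prop := ∀ j, A.E (π j) (π (j + 1))

/-- A strategy: given the past history (the earlier vertices, oldest first) and the
current vertex, pick an `E`-successor of the current vertex. -/
structure Strategy (A : Arena V n) where
  next : List V → V → V
  valid : ∀ h v, A.E v (next h v)

/-- The list of the first `j` vertices of a play. -/
def pref (π : ℕ → V) (j : ℕ) : List V := (List.range j).map π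

/-- A play is consistent with the strategy `σ` used by player `i`. -/
def Consistent (A : Arena V n) (i : Fin n) (σ : A.Strategy) (π : ℕ → V) : Prop :=
  ∀ j, A.owner (π j) = i → π (j + 1) = σ.next (pref π j) (π j)

/-- A memoryless strategy only depends on the current vertex. -/
def Memoryless {A : Arena V n} (σ : A.Strategy) : Prop :=
  ∀ h h' v, σ.next h v = σ.next h' v

def outcomeAux (A : Arena V n) (σ : Fin n → A.Strategy) (v0 : V) : ℕ → List V × V
  | 0 => ([], v0)
  | j + 1 =>
      let p := outcomeAux A σ v0 j
      (p.1 ++ [p.2], (σ (A.owner p.2)).next p.1 p.2)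

/-- The outcome of the strategy profile `σ` from `v0`: the unique play from `v0`
consistent with every strategy of the profile. -/
def outcome (A : Arena V n) (σ : Fin n → A.Strategy) (v0 : V) (j : ℕ) : V :=
  (outcomeAux A σ v0 j).2

/-- Reachability objective: visit `T`. -/
def ReachObj (T : Set V) : Set (ℕ → V) := {π | ∃ j, π j ∈ T}

/-- Safety objective: never visit `T`. -/
def SafeObj (T : Set V) : Set (ℕ → V) := {π | ∀ j, π j ∉ T}

/-- Büchi objective: visit `T` infinitely often. -/
def BuchiObj (T : Set V) : Set (ℕ → V) := {π | ∀ j, ∃ k, j ≤ k ∧ π k ∈ T}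

/-- co-Büchi objective: visit `T` only finitely often. -/
def CoBuchiObj (T : Set V) : Set (ℕ → V) := {π | ∃ j, ∀ k, j ≤ k → π k ∉ T}

/-- Shortest-path cost of a play: the total weight up to the first visit of `T`,
and `⊤` if `T` is never visited. -/
noncomputable def spCost (w : V → V → ℕ) (T : Set V) (π : ℕ → V) : ℝ≥0∞ :=
  if ∃ k, π k ∈ T then
    (Finset.range (sInf {k | π k ∈ T})).sum fun j => (w (π j) (π (j + 1)) : ℝ≥0∞)
  else ⊤

/-- Winning region of player `p` (whose objective is `Ω`) in a two-player game:
vertices from which `p` has a strategy all of whose consistent plays lie in `Ω`. -/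
def WinRegion (A : Arena V 2) (p : Fin 2) (Ω : Set (ℕ → V)) : Set V :=
  {v | ∃ σ : A.Strategy, ∀ π, A.IsPlay π → π 0 = v → A.Consistent p σ π → π ∈ Ω}

/-- Lower value `inf_{σ₁} sup_{σ₂}` of a two-player zero-sum game with cost `c`
(minimised by player 1, maximised by player 2). -/
noncomputable def valIS (A : Arena V 2) (c : (ℕ → V) → ℝ≥0∞) (v : V) : ℝ≥0∞ :=
  ⨅ σ1 : A.Strategy, ⨆ σ2 : A.Strategy, c (outcome A ![σ1, σ2] v)

/-- Upper value `sup_{σ₂} inf_{σ₁}`. -/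
noncomputable def valSI (A : Arena V 2) (c : (ℕ → V) → ℝ≥0∞) (v : V) : ℝ≥0∞ :=
  ⨆ σ2 : A.Strategy, ⨅ σ1 : A.Strategy, c (outcome A ![σ1, σ2] v)

/-- Nash equilibrium from `v0` for cost functions (each player minimises):
no unilateral deviation decreases the deviator's cost. -/
def IsNECost (A : Arena V n) (cost : Fin n → (ℕ → V) → ℝ≥0∞)
    (σ : Fin n → A.Strategy) (v0 : V) : Prop :=
  ∀ (i : Fin n) (τ : A.Strategy),
    cost i (outcome A σ v0) ≤ cost i (outcome A (Function.update σ i τ) v0)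

/-- Nash equilibrium from `v0` for objectives: if a unilateral deviation of player `i`
satisfies `Ω i`, then so does the equilibrium outcome. -/
def IsNEObj (A : Arena V n) (Ω : Fin n → Set (ℕ → V))
    (σ : Fin n → A.Strategy) (v0 : V) : Prop :=
  ∀ (i : Fin n) (τ : A.Strategy),
    outcome A (Function.update σ i τ) v0 ∈ Ω i → outcome A σ v0 ∈ Ω i

/-- The coalition arena of player `i`: player `i` (as player `0`) against all others. -/
def coalition (A : Arena V n) (i : Fin n) : Arena V 2 where
  E := A.E
  owner := fun v => if A.owner v = i then 0 else 1
  no_deadlock := A.no_deadlock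

/-- Winning region of player `i` in their coalition game for objective `Ω`. -/
def coalWin (A : Arena V n) (i : Fin n) (Ω : Set (ℕ → V)) : Set V :=
  WinRegion (coalition A i) 0 Ω

/-- Value of a vertex in player `i`'s coalition game with cost `c`. -/
noncomputable def coalVal (A : Arena V n) (i : Fin n) (c : (ℕ → V) → ℝ≥0∞) (v : V) :
    ℝ≥0∞ :=
  valIS (coalition A i) c v

/-- Players whose reachability objective is satisfied by `π`. -/
def satReach (T : Fin n → Set V) (π : ℕ → V) : Set (Fin n) := {i | ∃ j, π j ∈ T i}

/-- Players whose safety objective is satisfied by `π`. -/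
def satSafe (T : Fin n → Set V) (π : ℕ → V) : Set (Fin n) := {i | ∀ j, π j ∉ T i}

/-- Players whose Büchi objective is satisfied by `π`. -/
def satBuchi (T : Fin n → Set V) (π : ℕ → V) : Set (Fin n) :=
  {i | ∀ j, ∃ k, j ≤ k ∧ π k ∈ T i}

/-- Players whose co-Büchi objective is satisfied by `π`. -/
def satCoBuchi (T : Fin n → Set V) (π : ℕ → V) : Set (Fin n) :=
  {i | ∃ j, ∀ k, j ≤ k → π k ∉ T i}

/-- Earliest positions at which the targets visited by `π` are first visited. -/
def visitSet (T : Fin n → Set V) (π : ℕ → V) : Set ℕ :=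
  {m | ∃ i, (∃ j, π j ∈ T i) ∧ m = sInf {j | π j ∈ T i}}

/-- A Mealy machine with memory states `M`. -/
structure Mealy (A : Arena V n) (M : Type) where
  init : M
  up : M → V → M
  nxt : M → V → V
  valid : ∀ m v, A.E v (nxt m v)

/-- The strategy `σ` is induced by the Mealy machine `mm`. -/
def InducedBy {A : Arena V n} {M : Type} (σ : A.Strategy) (mm : Mealy A M) : Prop :=
  ∀ h v, σ.next h v = mm.nxt (h.foldl mm.up mm.init) v

/-- `σ` has memory size at most `b`. -/
def HasMemorySize {A : Arena V n} (σ : A.Strategy) (b : ℕ) : Prop :=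
  ∃ (M : Type) (mm : Mealy A M), Finite M ∧ Nat.card M ≤ b ∧ InducedBy σ mm

/-- `σ` is a finite-memory strategy. -/
def FiniteMemory {A : Arena V n} (σ : A.Strategy) : Prop :=
  ∃ (M : Type) (mm : Mealy A M), Finite M ∧ InducedBy σ mm

/-- The (finite) segment of `π` between positions `a` and `b` is a simple history. -/
def SimpleSeg (π : ℕ → V) (a b : ℕ) : Prop :=
  ∀ m m', a ≤ m → m ≤ b → a ≤ m' → m' ≤ b → π m = π m' → m = m'

/-- The suffix of `π` from position `a` is a simple play. -/
def SimplePlaySeg (π : ℕ → V) (a : ℕ) : Prop :=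
  ∀ m m', a ≤ m → a ≤ m' → π m = π m' → m = m'

/-- The suffix of `π` from position `a` is a simple lasso `p c^ω` with `p c`
a simple history. -/
def SimpleLassoSeg (π : ℕ → V) (a : ℕ) : Prop :=
  ∃ k ℓ, 0 < ℓ ∧ (∀ m, a + k ≤ m → π (m + ℓ) = π m) ∧
    ∀ m m', a ≤ m → m < a + k + ℓ → a ≤ m' → m' < a + k + ℓ → π m = π m' → m = m'

/-- The segment of `π` between positions `a` and `b` is a simple cycle. -/
def SimpleCycleSeg (π : ℕ → V) (a b : ℕ) : Prop :=
  a < b ∧ π b = π a ∧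
    ∀ m m', a ≤ m → m < b → a ≤ m' → m' < b → π m = π m' → m = m'

/-- Total weight of a history (a list of vertices). -/
def histWeight (w : V → V → ℕ) : List V → ℕ
  | [] => 0
  | [_] => 0
  | a :: b :: t => w a b + histWeight w (b :: t)

/-- The list of vertices along positions `a..b` (inclusive) of a play. -/
def segList (π : ℕ → V) (a b : ℕ) : List V :=
  (List.range (b - a + 1)).map fun m => π (a + m)

/-- The segment of `π` between positions `a` and `b` has minimal weight among all
histories that share its first and last vertex and traverse only its vertices. -/
def MinWeightSeg (A : Arena V n) (w : V → V → ℕ) (π : ℕ → V) (a b : ℕ) : Prop :=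
  ∀ h : List V, h ≠ [] → List.Chain' A.E h →
    h.head? = some (π a) → h.getLast? = some (π b) →
    (∀ x ∈ h, ∃ m, a ≤ m ∧ m ≤ b ∧ π m = x) →
    histWeight w (segList π a b) ≤ histWeight w h

/-- Given cut positions `p`, segments number `l` and `l'` of `π` carry the same
vertex sequence. -/
def SegEq (π : ℕ → V) (p : ℕ → ℕ) (l l' : ℕ) : Prop :=
  p (l' + 1) - p l' = p (l + 1) - p l ∧
    ∀ m, m ≤ p (l + 1) - p l → π (p l' + m) = π (p l + m)

/-- There is no cycle of the arena using only vertices of `S` and avoiding `avoid`. -/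
def NoCycleAvoid (A : Arena V n) (S : Set V) (avoid : V) : Prop :=
  ¬ ∃ (m : ℕ) (c : ℕ → V), 0 < m ∧ (∀ j, j < m → A.E (c j) (c (j + 1))) ∧
      c m = c 0 ∧ ∀ j, j ≤ m → c j ∈ S ∧ c j ≠ avoid

end Arena

open Arena

/-!
Cut the equilibrium outcome `π` at the positions where it first visits some target. Between
two consecutive cuts, replace `π` by a walk without repeated vertices through the same
vertices, so that the current vertex determines the position on the walk. The new profile
follows these walks one after the other and afterwards keeps avoiding the targets of the
players that `π` keeps safe; if some walk has a backward edge, along which a deviator could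
circle undetected, it follows that walk only up to the edge and then loops on it, which avoids
every target first visited later. The memory holds the index of the current walk (or a tail or
punishing phase) and the last losing player who moved. A losing player `i` who leaves the walk
is punished by the memoryless attractor strategy of the others towards `T i`: since `σ'` is an
equilibrium, every vertex of `π` before its first visit to `T i` lies in that attractor.
-/

noncomputable section

namespace Arena

variable {V : Type} {n : ℕ}

section

variable {A : Arena V n}

lemma pref_succ (π : ℕ → V) (t : ℕ) : pref π (t + 1) = pref π t ++ [π t] := by
  simp [pref, List.range_succ]

@[simp]
lemma length_pref (π : ℕ → V) (t : ℕ) : (pref π t).length = t := by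
  simp [pref]

lemma pref_congr {π ρ : ℕ → V} {t : ℕ} (h : ∀ j < t, π j = ρ j) : pref π t = pref ρ t :=
  List.map_congr_left fun j hj => h j (List.mem_range.1 hj)

lemma outcomeAux_fst (σ : Fin n → A.Strategy) (v0 : V) (t : ℕ) :
    (outcomeAux A σ v0 t).1 = pref (outcome A σ v0) t := by
  induction t with
  | zero => rfl
  | succ t ih => rw [pref_succ, ← ih]; rfl

lemma outcome_succ (σ : Fin n → A.Strategy) (v0 : V) (t : ℕ) :
    outcome A σ v0 (t + 1) =
      (σ (A.owner (outcome A σ v0 t))).next (pref (outcome A σ v0) t) (outcome A σ v0 t) := by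
  rw [← outcomeAux_fst]; rfl

@[simp]
lemma outcome_zero (σ : Fin n → A.Strategy) (v0 : V) : outcome A σ v0 0 = v0 := rfl

lemma isPlay_outcome (σ : Fin n → A.Strategy) (v0 : V) : A.IsPlay (outcome A σ v0) :=
  fun t => by rw [outcome_succ]; exact Strategy.valid _ _ _

lemma outcome_update_succ_of_owner_ne {σ : Fin n → A.Strategy} {i : Fin n} {τ : A.Strategy}
    {v0 : V} {t : ℕ} (h : A.owner (outcome A (Function.update σ i τ) v0 t) ≠ i) :
    outcome A (Function.update σ i τ) v0 (t + 1) =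
      (σ (A.owner (outcome A (Function.update σ i τ) v0 t))).next
        (pref (outcome A (Function.update σ i τ) v0) t)
        (outcome A (Function.update σ i τ) v0 t) := by
  rw [outcome_succ, Function.update_of_ne h]

lemma outcome_update_succ_of_owner_eq {σ : Fin n → A.Strategy} {i : Fin n} {τ : A.Strategy}
    {v0 : V} {t : ℕ} (h : A.owner (outcome A (Function.update σ i τ) v0 t) = i) :
    outcome A (Function.update σ i τ) v0 (t + 1) =
      τ.next (pref (outcome A (Function.update σ i τ) v0) t)
        (outcome A (Function.update σ i τ) v0 t) := by
  rw [outcome_succ, h, Function.update_self]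

lemma outcome_update_eq_of_agree {σ : Fin n → A.Strategy} {i : Fin n} {τ : A.Strategy} {v0 : V}
    {k : ℕ} (hτ : ∀ h v, h.length < k → τ.next h v = (σ i).next h v) :
    ∀ t ≤ k, outcome A (Function.update σ i τ) v0 t = outcome A σ v0 t := by
  intro t
  induction t using Nat.strong_induction_on with
  | _ t ih =>
    match t with
    | 0 => intro _; rfl
    | t + 1 =>
      intro ht
      have hpref := pref_congr fun j (hj : j < t) => ih j (by omega) (by omega)
      have hcur := ih t (by omega) (by omega)
      by_cases hown : A.owner (outcome A (Function.update σ i τ) v0 t) = i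
      · rw [outcome_update_succ_of_owner_eq hown, hτ _ _ (by rw [length_pref]; omega), hpref, hcur,
          outcome_succ, ← hcur, hown]
      · rw [outcome_update_succ_of_owner_ne hown, hpref, hcur, outcome_succ]

def Strategy.ofFun (f : V → V) (hf : ∀ v, A.E v (f v)) : A.Strategy :=
  ⟨fun _ v => f v, fun _ v => hf v⟩

def Strategy.switch (σ τ : A.Strategy) (k : ℕ) : A.Strategy :=
  ⟨fun h v => if h.length < k then σ.next h v else τ.next h v,
    fun h v => by split <;> apply Strategy.valid⟩

lemma outcome_ofFun (f : V → V) (hf : ∀ v, A.E v (f v)) (v0 : V) (t : ℕ) :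
    outcome A (fun _ => Strategy.ofFun f hf) v0 t = f^[t] v0 := by
  induction t with
  | zero => rfl
  | succ t ih => rw [outcome_succ, Function.iterate_succ_apply', ← ih]; rfl

def Mealy.ofAct {M : Type} (init : M) (up : M → V → M) (act : M → V → V)
    (hact : ∀ m v, A.E v (act m v)) : Mealy A M :=
  ⟨init, up, fun m v => act (up m v) v, fun _ v => hact _ v⟩

def Mealy.strategy {M : Type} (mm : Mealy A M) : A.Strategy :=
  ⟨fun h v => mm.nxt (h.foldl mm.up mm.init) v, fun _ _ => mm.valid _ _⟩

lemma Mealy.hasMemorySize_strategy {M : Type} [Finite M] (mm : Mealy A M) {b : ℕ}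
    (hb : Nat.card M ≤ b) : HasMemorySize mm.strategy b :=
  ⟨M, mm, inferInstance, hb, fun _ _ => rfl⟩

lemma hasMemorySize_ofFun (f : V → V) (hf : ∀ v, A.E v (f v)) {b : ℕ} (hb : 1 ≤ b) :
    HasMemorySize (Strategy.ofFun f hf) b :=
  Mealy.hasMemorySize_strategy (M := Unit) ⟨(), fun _ _ => (), fun _ => f, fun _ => hf⟩
    (by simpa using hb)

/-- The memory after reading `ρ 0, …, ρ (t - 1)`. -/
def Mealy.state {M : Type} (mm : Mealy A M) (ρ : ℕ → V) (t : ℕ) : M :=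
  (pref ρ t).foldl mm.up mm.init

lemma Mealy.state_succ {M : Type} (mm : Mealy A M) (ρ : ℕ → V) (t : ℕ) :
    mm.state ρ (t + 1) = mm.up (mm.state ρ t) (ρ t) := by
  rw [state, pref_succ, List.foldl_append]; rfl

lemma Mealy.strategy_next_pref {M : Type} (mm : Mealy A M) (ρ : ℕ → V) (t : ℕ) :
    mm.strategy.next (pref ρ t) (ρ t) = mm.nxt (mm.state ρ t) (ρ t) := rfl

lemma HasMemorySize.mono {σ : A.Strategy} {b b' : ℕ} (h : HasMemorySize σ b) (hb : b ≤ b') :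
    HasMemorySize σ b' :=
  let ⟨M, mm, hM, hcard, hind⟩ := h
  ⟨M, mm, hM, hcard.trans hb, hind⟩

end

def anySucc (A : Arena V n) (v : V) : V := (A.no_deadlock v).choose

lemma anySucc_spec (A : Arena V n) (v : V) : A.E v (A.anySucc v) := (A.no_deadlock v).choose_spec

section Attractor

variable (A : Arena V n) (i : Fin n) (U : Set V)

open OrdinalApprox

def attrStep : Set V →o Set V where
  toFun Y := U ∪ {v | A.owner v ≠ i ∧ ∃ w, A.E v w ∧ w ∈ Y} ∪
    {v | A.owner v = i ∧ ∀ w, A.E v w → w ∈ Y}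
  monotone' Y Z h := by
    rintro v ((hv | ⟨hown, w, hw, hwY⟩) | ⟨hown, hall⟩)
    · exact Or.inl (Or.inl hv)
    · exact Or.inl (Or.inr ⟨hown, w, hw, h hwY⟩)
    · exact Or.inr ⟨hown, fun w hw => h (hall w hw)⟩

def attractor : Set V := (attrStep A i U).lfp

def attrRank (v : V) : Ordinal :=
  sInf {a | v ∈ lfpApprox (attrStep A i U) ⊥ a}

variable {A i U}

lemma attrStep_attractor : attrStep A i U (attractor A i U) = attractor A i U :=
  OrderHom.map_lfp _

lemma subset_attractor : U ⊆ attractor A i U := fun v hv => by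
  rw [← attrStep_attractor]; exact Or.inl (Or.inl hv)

lemma notMem_attractor_of_owner_ne {v w : V} (hv : v ∉ attractor A i U)
    (hown : A.owner v ≠ i) (hw : A.E v w) : w ∉ attractor A i U := fun hwA => by
  rw [← attrStep_attractor] at hv; exact hv (Or.inl (Or.inr ⟨hown, w, hw, hwA⟩))

lemma exists_notMem_attractor_of_owner_eq {v : V} (hv : v ∉ attractor A i U)
    (hown : A.owner v = i) : ∃ w, A.E v w ∧ w ∉ attractor A i U := by
  by_contra! h
  rw [← attrStep_attractor] at hv; exact hv (Or.inr ⟨hown, h⟩)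

lemma mem_attractor_of_owner_eq {v w : V} (hv : v ∈ attractor A i U) (hvU : v ∉ U)
    (hown : A.owner v = i) (hw : A.E v w) : w ∈ attractor A i U := by
  rw [← attrStep_attractor] at hv
  rcases hv with (hv | hv) | hv
  · exact absurd hv hvU
  · exact absurd hown hv.1
  · exact hv.2 w hw

lemma mem_attractor_iff {v : V} :
    v ∈ attractor A i U ↔ ∃ a, v ∈ lfpApprox (attrStep A i U) ⊥ a := by
  refine ⟨fun hv => ⟨_, by rwa [lfpApprox_ord_eq_lfp]⟩, fun ⟨a, ha⟩ => ?_⟩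
  exact lfpApprox_le_of_mem_fixedPoints _ attrStep_attractor bot_le a ha

lemma exists_lt_attrRank {v : V} (hv : v ∈ attractor A i U) :
    ∃ b < attrRank A i U v, v ∈ attrStep A i U (lfpApprox (attrStep A i U) ⊥ b) := by
  have hmem : v ∈ lfpApprox (attrStep A i U) ⊥ (attrRank A i U v) :=
    csInf_mem (mem_attractor_iff.1 hv)
  rw [lfpApprox] at hmem
  simpa using hmem

lemma attrRank_le {v : V} {b : Ordinal} (hv : v ∈ lfpApprox (attrStep A i U) ⊥ b) :
    attrRank A i U v ≤ b :=
  csInf_le' (s := {a | v ∈ lfpApprox (attrStep A i U) ⊥ a}) hv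

lemma exists_attrRank_lt {v : V} (hv : v ∈ attractor A i U) (hvU : v ∉ U)
    (hown : A.owner v ≠ i) :
    ∃ w, A.E v w ∧ w ∈ attractor A i U ∧ attrRank A i U w < attrRank A i U v := by
  obtain ⟨b, hb, hvb⟩ := exists_lt_attrRank hv
  rcases hvb with (h | ⟨-, w, hw, hwb⟩) | h
  · exact absurd h hvU
  · exact ⟨w, hw, mem_attractor_iff.2 ⟨b, hwb⟩, (attrRank_le hwb).trans_lt hb⟩
  · exact absurd h.1 hown

lemma attrRank_lt_of_owner_eq {v w : V} (hv : v ∈ attractor A i U) (hvU : v ∉ U)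
    (hown : A.owner v = i) (hw : A.E v w) : attrRank A i U w < attrRank A i U v := by
  obtain ⟨b, hb, hvb⟩ := exists_lt_attrRank hv
  rcases hvb with (h | h) | ⟨-, hall⟩
  · exact absurd h hvU
  · exact absurd hown h.1
  · exact (attrRank_le (hall w hw)).trans_lt hb

variable (A i U)

def attrSucc (v : V) : V :=
  if h : v ∈ attractor A i U ∧ v ∉ U ∧ A.owner v ≠ i then
    (exists_attrRank_lt h.1 h.2.1 h.2.2).choose
  else A.anySucc v

def escapeSucc (v : V) : V :=
  if h : ∃ w, A.E v w ∧ w ∉ attractor A i U then h.choose else A.anySucc v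

variable {A i U}

lemma attrSucc_spec (v : V) : A.E v (attrSucc A i U v) := by
  unfold attrSucc; split
  · next h => exact (exists_attrRank_lt h.1 h.2.1 h.2.2).choose_spec.1
  · exact A.anySucc_spec v

lemma escapeSucc_spec (v : V) : A.E v (escapeSucc A i U v) := by
  unfold escapeSucc; split
  · next h => exact h.choose_spec.1
  · exact A.anySucc_spec v

/-- The rank decreases along the play until `U` is visited. -/
lemma exists_mem_of_attrSucc {ρ : ℕ → V} (hρ : A.IsPlay ρ) {t₀ : ℕ}
    (h₀ : ρ t₀ ∈ attractor A i U)
    (hcoal : ∀ t, t₀ ≤ t → A.owner (ρ t) ≠ i → ρ (t + 1) = attrSucc A i U (ρ t)) :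
    ∃ t, ρ t ∈ U := by
  by_contra! hno
  suffices key : ∀ a : Ordinal, ∀ t, t₀ ≤ t → ρ t ∈ attractor A i U →
      attrRank A i U (ρ t) = a → False from key _ t₀ le_rfl h₀ rfl
  intro a
  induction a using WellFoundedLT.induction with
  | ind a ih =>
    intro t ht hmem hrank
    by_cases hown : A.owner (ρ t) = i
    · exact ih _ (hrank ▸ attrRank_lt_of_owner_eq hmem (hno t) hown (hρ t)) (t + 1) (by omega)
        (mem_attractor_of_owner_eq hmem (hno t) hown (hρ t)) rfl
    · have hnext : attrSucc A i U (ρ t) = _ := dif_pos ⟨hmem, hno t, hown⟩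
      have hspec := (exists_attrRank_lt hmem (hno t) hown).choose_spec
      rw [← hnext, ← hcoal t ht hown] at hspec
      exact ih _ (hrank ▸ hspec.2.2) (t + 1) (by omega) hspec.2.1 rfl

lemma notMem_attractor_of_escapeSucc {ρ : ℕ → V} (hρ : A.IsPlay ρ) {t₀ : ℕ}
    (h₀ : ρ t₀ ∉ attractor A i U)
    (hi : ∀ t, t₀ ≤ t → A.owner (ρ t) = i → ρ (t + 1) = escapeSucc A i U (ρ t)) :
    ∀ t, t₀ ≤ t → ρ t ∉ attractor A i U := by
  intro t ht
  induction t, ht using Nat.le_induction with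
  | base => exact h₀
  | succ t ht ih =>
    by_cases hown : A.owner (ρ t) = i
    · have hex := exists_notMem_attractor_of_owner_eq ih hown
      rw [hi t ht hown, escapeSucc, dif_pos hex]
      exact hex.choose_spec.2
    · exact notMem_attractor_of_owner_ne ih hown (hρ t)

end Attractor

section Equilibria

variable {A : Arena V n}

/-- Otherwise `i` could copy the equilibrium up to position `k` and then escape the attractor
forever. -/
theorem IsNEObj.outcome_mem_attractor {T : Fin n → Set V} {σ : Fin n → A.Strategy} {v0 : V}
    (hNE : A.IsNEObj (fun i => SafeObj (T i)) σ v0) {i : Fin n}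
    (hi : outcome A σ v0 ∉ SafeObj (T i)) {k : ℕ} (hk : ∀ t < k, outcome A σ v0 t ∉ T i) :
    outcome A σ v0 k ∈ attractor A i (T i) := by
  by_contra hout
  set τ := (σ i).switch (Strategy.ofFun _ (escapeSucc_spec (A := A) (i := i) (U := T i))) k
  have hagree := outcome_update_eq_of_agree (v0 := v0) (τ := τ) fun h v hh => if_pos hh
  have hescape : ∀ t, k ≤ t → outcome A (Function.update σ i τ) v0 t ∉ attractor A i (T i) :=
    notMem_attractor_of_escapeSucc (isPlay_outcome _ v0) (hagree k le_rfl ▸ hout)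
      fun t ht hown => by
        rw [outcome_update_succ_of_owner_eq hown]
        exact if_neg (by simp only [length_pref]; omega)
  refine hi (hNE i τ fun t ht => ?_)
  rcases lt_or_ge t k with htk | htk
  · exact hk t htk (hagree t htk.le ▸ ht)
  · exact hescape t htk (subset_attractor ht)

end Equilibria

end Arena

section Walks

variable {α : Type*} {r : α → α → Prop}

lemma walk_splice {x : ℕ → α} {L a b : ℕ} (hx : ∀ m < L, r (x m) (x (m + 1))) (hab : a < b)
    (hbL : b ≤ L) (heq : x a = x b) :
    ∀ m < L - (b - a), r (x (if m < a then m else m + (b - a)))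
      (x (if m + 1 < a then m + 1 else m + 1 + (b - a))) := by
  intro m hm
  by_cases h1 : m + 1 < a
  · rw [if_pos (by omega), if_pos h1]; exact hx m (by omega)
  by_cases h2 : m < a
  · rw [if_pos h2, if_neg h1, show m + 1 + (b - a) = b by omega, ← heq, show a = m + 1 by omega]
    exact hx m (by omega)
  · rw [if_neg h2, if_neg h1, show m + 1 + (b - a) = m + (b - a) + 1 by omega]
    exact hx _ (by omega)

/-- A shortest such walk has no repeated vertex, by `walk_splice`. -/
theorem exists_injOn_walk {w : ℕ → α} {N : ℕ} (hw : ∀ m < N, r (w m) (w (m + 1))) :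
    ∃ (L : ℕ) (x : ℕ → α), x 0 = w 0 ∧ x L = w N ∧ (∀ m < L, r (x m) (x (m + 1))) ∧
      (∀ m ≤ L, ∃ k ≤ N, x m = w k) ∧ Set.InjOn x (Set.Iic L) := by
  classical
  let P : ℕ → Prop := fun l => ∃ x : ℕ → α, x 0 = w 0 ∧ x l = w N ∧
    (∀ m < l, r (x m) (x (m + 1))) ∧ ∀ m ≤ l, ∃ k ≤ N, x m = w k
  have hP : ∃ l, P l := ⟨N, w, rfl, rfl, hw, fun m hm => ⟨m, hm, rfl⟩⟩
  obtain ⟨x, hx0, hxL, hx, hxw⟩ := Nat.find_spec hP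
  refine ⟨_, x, hx0, hxL, hx, hxw, fun a ha b hb heq => ?_⟩
  by_contra hne
  wlog hab : a < b generalizing a b
  · exact this b hb a ha heq.symm (Ne.symm hne) (by omega)
  have hb' : b ≤ Nat.find hP := hb
  refine Nat.find_min hP (m := Nat.find hP - (b - a)) (by omega)
    ⟨fun m => x (if m < a then m else m + (b - a)), ?_, ?_, walk_splice hx hab hb' heq, ?_⟩
  · by_cases h : 0 < a
    · simp [h, hx0]
    · simp only [show a = 0 by omega, lt_self_iff_false, if_false, zero_add, Nat.sub_zero]
      rw [← heq, show a = 0 by omega, hx0]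
  · simp only
    rw [if_neg (by omega), Nat.sub_add_cancel (by omega), hxL]
  · intro m hm
    exact hxw _ (by split <;> omega)

end Walks

lemma exists_of_bounded_progress {α : Type*} {P : α → Prop} {Q : Prop} (μ : α → ℕ) (B : ℕ)
    (h₀ : ∃ a, P a) (hstep : ∀ a, P a → Q ∨ ∃ b, P b ∧ μ a < μ b)
    (hbdd : ∀ a, P a → μ a < B) : Q := by
  by_contra hQ
  have hgrow : ∀ k, ∃ a, P a ∧ k ≤ μ a := by
    intro k
    induction k with
    | zero => exact h₀.imp fun a ha => ⟨ha, Nat.zero_le _⟩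
    | succ k ih =>
      obtain ⟨a, ha, hk⟩ := ih
      obtain ⟨b, hb, hab⟩ := (hstep a ha).resolve_left hQ
      exact ⟨b, hb, by omega⟩
  obtain ⟨a, ha, hB⟩ := hgrow B
  exact (hbdd a ha).not_ge hB

namespace SafetyFM

open Arena

structure Setting (V : Type) (n : ℕ) where
  A : Arena V n
  T : Fin n → Set V
  v0 : V
  σ : Fin n → A.Strategy

namespace Setting

variable {V : Type} {n : ℕ} (S : Setting V n)

def play : ℕ → V := outcome S.A S.σ S.v0

def safe : Set (Fin n) := satSafe S.T S.play

abbrev Losing : Type := {i : Fin n // i ∉ S.safe}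

def safeTargets : Set V := {v | ∃ j ∈ S.safe, v ∈ S.T j}

def avoidRegion : Set V := {v | ∃ ρ, S.A.IsPlay ρ ∧ ρ 0 = v ∧ ∀ t, ρ t ∉ S.safeTargets}

def avoidSucc (v : V) : V :=
  if h : v ∈ S.avoidRegion then h.choose 1 else S.A.anySucc v

def firstVisit (i : Fin n) : ℕ := sInf {j | S.play j ∈ S.T i}

def IsVisitPos (k : ℕ) : Prop := k = 0 ∨ k ∈ visitSet S.T S.play

def numVisits : ℕ := (visitSet S.T S.play \ {0}).ncard

/-- The `s`-th visit position in increasing order, for `s ≤ numVisits`. -/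
def visitPos (s : ℕ) : ℕ := Nat.nth S.IsVisitPos s

lemma isPlay_play : S.A.IsPlay S.play := isPlay_outcome _ _

lemma play_notMem_safeTargets (t : ℕ) : S.play t ∉ S.safeTargets :=
  fun ⟨_, hj, hv⟩ => hj t hv

lemma play_mem_avoidRegion (t : ℕ) : S.play t ∈ S.avoidRegion :=
  ⟨fun k => S.play (t + k), fun k => S.isPlay_play (t + k), rfl,
    fun k => S.play_notMem_safeTargets (t + k)⟩

lemma notMem_safeTargets_of_mem_avoidRegion {v : V} (hv : v ∈ S.avoidRegion) :
    v ∉ S.safeTargets := by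
  obtain ⟨ρ, -, rfl, hρ⟩ := hv
  exact hρ 0

lemma avoidSucc_spec (v : V) : S.A.E v (S.avoidSucc v) := by
  unfold avoidSucc; split
  · next h =>
    obtain ⟨hplay, h0, -⟩ := h.choose_spec
    simpa [h0] using hplay 0
  · exact S.A.anySucc_spec v

lemma avoidSucc_mem {v : V} (hv : v ∈ S.avoidRegion) : S.avoidSucc v ∈ S.avoidRegion := by
  rw [avoidSucc, dif_pos hv]
  obtain ⟨hplay, -, hsafe⟩ := hv.choose_spec
  exact ⟨fun k => hv.choose (1 + k), fun k => hplay (1 + k), rfl, fun k => hsafe (1 + k)⟩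

variable {S}

lemma play_firstVisit_mem {i : Fin n} (hi : i ∉ S.safe) : S.play (S.firstVisit i) ∈ S.T i := by
  simp only [safe, satSafe, Set.mem_ofPred_eq, not_forall, not_not] at hi
  exact Nat.sInf_mem hi

lemma play_notMem_of_lt_firstVisit {i : Fin n} {t : ℕ} (ht : t < S.firstVisit i) :
    S.play t ∉ S.T i :=
  fun h => (Nat.sInf_le h).not_gt ht

lemma firstVisit_le {i : Fin n} {t : ℕ} (ht : S.play t ∈ S.T i) : S.firstVisit i ≤ t :=
  Nat.sInf_le ht

variable (S)

lemma visitSet_subset_range : visitSet S.T S.play ⊆ Set.range S.firstVisit := by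
  rintro _ ⟨i, -, rfl⟩
  exact ⟨i, rfl⟩

lemma visitSet_finite : (visitSet S.T S.play).Finite :=
  (Set.finite_range _).subset S.visitSet_subset_range

lemma visitPos_finite : (Set.ofPred S.IsVisitPos).Finite :=
  (S.visitSet_finite.insert 0).subset fun _ hk => hk

lemma card_visitPos : S.visitPos_finite.toFinset.card = S.numVisits + 1 := by
  have hset : Set.ofPred S.IsVisitPos = insert 0 (visitSet S.T S.play \ {0}) := by
    rw [Set.insert_sdiff_singleton]; rfl
  rw [← Set.ncard_eq_toFinset_card _ S.visitPos_finite, hset,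
    Set.ncard_insert_of_notMem (by simp) S.visitSet_finite.sdiff, numVisits]

lemma numVisits_le : S.numVisits ≤ n :=
  calc S.numVisits ≤ (Set.range S.firstVisit).ncard :=
        Set.ncard_le_ncard (Set.sdiff_subset.trans S.visitSet_subset_range) (Set.finite_range _)
    _ = Nat.card (Set.range S.firstVisit) := (Nat.card_coe_set_eq _).symm
    _ ≤ n := (Finite.card_range_le _).trans (Nat.card_fin n).le

variable {S}

@[simp]
lemma visitPos_zero : S.visitPos 0 = 0 := Nat.nth_zero_of_zero (Set.mem_insert _ _)

lemma visitPos_lt_visitPos {s s' : ℕ} (h : s < s') (hs' : s' ≤ S.numVisits) :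
    S.visitPos s < S.visitPos s' :=
  Nat.nth_lt_nth_of_lt_card S.visitPos_finite h (by rw [card_visitPos]; omega)

lemma visitPos_mono {s s' : ℕ} (h : s ≤ s') (hs' : s' ≤ S.numVisits) :
    S.visitPos s ≤ S.visitPos s' :=
  h.eq_or_lt.elim (fun h => h ▸ le_rfl) fun h => (visitPos_lt_visitPos h hs').le

lemma exists_visitPos_eq {k : ℕ} (hk : S.IsVisitPos k) :
    ∃ s ≤ S.numVisits, S.visitPos s = k := by
  obtain ⟨s, hs, rfl⟩ := Nat.exists_lt_card_finite_nth_eq S.visitPos_finite hk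
  exact ⟨s, by rw [card_visitPos] at hs; omega, rfl⟩

lemma exists_visitPos_eq_firstVisit {i : Fin n} (hi : i ∉ S.safe) :
    ∃ s ≤ S.numVisits, S.visitPos s = S.firstVisit i :=
  exists_visitPos_eq (Or.inr ⟨i, ⟨_, play_firstVisit_mem hi⟩, rfl⟩)

lemma exists_play_visitPos_succ_mem {s : ℕ} (hs : s < S.numVisits) :
    ∃ i, S.play (S.visitPos (s + 1)) ∈ S.T i ∧ S.firstVisit i = S.visitPos (s + 1) := by
  have hmem : S.IsVisitPos (S.visitPos (s + 1)) :=
    Nat.nth_mem_of_lt_card S.visitPos_finite (by rw [card_visitPos]; omega)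
  have hpos := visitPos_lt_visitPos (S := S) (Nat.zero_lt_succ s) (by omega)
  rcases hmem with h | ⟨i, ⟨j, hj⟩, h⟩
  · simp [h] at hpos
  · exact ⟨i, h ▸ Nat.sInf_mem (s := {j | S.play j ∈ S.T i}) ⟨j, hj⟩, h.symm⟩

variable (S)

lemma exists_trace (s : ℕ) :
    ∃ (L : ℕ) (x : ℕ → V), x 0 = S.play (S.visitPos s) ∧
      x L = S.play (S.visitPos s + (S.visitPos (s + 1) - S.visitPos s)) ∧
      (∀ m < L, S.A.E (x m) (x (m + 1))) ∧
      (∀ m ≤ L, ∃ k ≤ S.visitPos (s + 1) - S.visitPos s, x m = S.play (S.visitPos s + k)) ∧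
      Set.InjOn x (Set.Iic L) :=
  exists_injOn_walk (w := fun k => S.play (S.visitPos s + k)) fun _ _ => S.isPlay_play _

def traceLen (s : ℕ) : ℕ := (S.exists_trace s).choose

/-- A walk from `play (visitPos s)` to `play (visitPos (s + 1))` through vertices that `play`
visits in between. Its vertices are distinct, so a vertex determines its position on it. -/
def trace (s : ℕ) : ℕ → V := (S.exists_trace s).choose_spec.choose

variable {S}

@[simp]
lemma trace_zero (s : ℕ) : S.trace s 0 = S.play (S.visitPos s) :=
  (S.exists_trace s).choose_spec.choose_spec.1

lemma trace_traceLen {s : ℕ} (hs : s < S.numVisits) :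
    S.trace s (S.traceLen s) = S.play (S.visitPos (s + 1)) := by
  refine (S.exists_trace s).choose_spec.choose_spec.2.1.trans ?_
  rw [Nat.add_sub_cancel' (visitPos_mono (Nat.le_add_right s 1) hs)]

lemma trace_edge {s m : ℕ} (hm : m < S.traceLen s) : S.A.E (S.trace s m) (S.trace s (m + 1)) :=
  (S.exists_trace s).choose_spec.choose_spec.2.2.1 m hm

lemma trace_injOn {s m m' : ℕ} (hm : m ≤ S.traceLen s) (hm' : m' ≤ S.traceLen s)
    (h : S.trace s m = S.trace s m') : m = m' :=
  (S.exists_trace s).choose_spec.choose_spec.2.2.2.2 hm hm' h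

lemma exists_trace_eq_play {s m : ℕ} (hs : s < S.numVisits) (hm : m ≤ S.traceLen s) :
    ∃ k, S.visitPos s ≤ k ∧ k ≤ S.visitPos (s + 1) ∧ S.trace s m = S.play k := by
  obtain ⟨k, hk, h⟩ := (S.exists_trace s).choose_spec.choose_spec.2.2.2.1 m hm
  exact ⟨_, le_self_add, by have := visitPos_mono (S := S) (Nat.le_add_right s 1) hs; omega, h⟩

lemma exists_trace_eq_play_of_lt {s m : ℕ} (hs : s < S.numVisits) (hm : m < S.traceLen s) :
    ∃ k < S.visitPos (s + 1), S.trace s m = S.play k := by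
  obtain ⟨k, -, hk, h⟩ := exists_trace_eq_play hs hm.le
  refine ⟨k, hk.lt_of_ne fun hk' => hm.ne (trace_injOn hm.le le_rfl ?_), h⟩
  rw [h, hk', trace_traceLen hs]

lemma trace_traceLen_eq_trace_succ_zero {s : ℕ} (hs : s < S.numVisits) :
    S.trace s (S.traceLen s) = S.trace (s + 1) 0 := by
  rw [trace_traceLen hs, trace_zero]

lemma traceLen_pos {s : ℕ} (hs : s < S.numVisits) : 0 < S.traceLen s := by
  obtain ⟨i, hi, hfirst⟩ := exists_play_visitPos_succ_mem hs
  by_contra! h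
  have hle := firstVisit_le (S := S) (i := i) (t := S.visitPos s) (by
    rwa [← trace_zero, ← Nat.le_zero.1 h, trace_traceLen hs])
  have := visitPos_lt_visitPos (S := S) (Nat.lt_add_one s) hs
  omega

lemma trace_notMem_safeTargets {s m : ℕ} (hs : s < S.numVisits) (hm : m ≤ S.traceLen s) :
    S.trace s m ∉ S.safeTargets := by
  obtain ⟨k, -, -, h⟩ := exists_trace_eq_play hs hm
  exact h ▸ S.play_notMem_safeTargets k

variable (S)

def traceSucc (s : ℕ) (v : V) : V :=
  if h : ∃ m < S.traceLen s, S.trace s m = v then S.trace s (h.choose + 1) else S.A.anySucc v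

variable {S}

lemma traceSucc_spec (s : ℕ) (v : V) : S.A.E v (S.traceSucc s v) := by
  unfold traceSucc; split
  · next h =>
    obtain ⟨hm, hv⟩ := h.choose_spec
    have hedge := trace_edge hm
    rwa [hv] at hedge
  · exact S.A.anySucc_spec v

lemma traceSucc_trace {s m : ℕ} (hm : m < S.traceLen s) :
    S.traceSucc s (S.trace s m) = S.trace s (m + 1) := by
  have h : ∃ m' < S.traceLen s, S.trace s m' = S.trace s m := ⟨m, hm, rfl⟩
  rw [traceSucc, dif_pos h, trace_injOn h.choose_spec.1.le hm.le h.choose_spec.2]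

variable (S)

def HasBackEdge (s : ℕ) : Prop :=
  ∃ e : ℕ × ℕ, e.2 ≤ e.1 ∧ e.1 < S.traceLen s ∧ S.A.E (S.trace s e.1) (S.trace s e.2)

/-- The index of the first trace with a backward edge, or `numVisits`. Only the traces before it
are followed: on a backward edge a deviator could circle forever without being detected. -/
def numTraces : ℕ :=
  Nat.find (⟨S.numVisits, Or.inl le_rfl⟩ : ∃ s, S.numVisits ≤ s ∨ S.HasBackEdge s)

variable {S}

lemma numTraces_le : S.numTraces ≤ S.numVisits := Nat.find_min' _ (Or.inl le_rfl)

lemma not_hasBackEdge {s : ℕ} (hs : s < S.numTraces) : ¬ S.HasBackEdge s :=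
  fun h => Nat.find_min _ hs (Or.inr h)

lemma hasBackEdge_numTraces (h : S.numTraces < S.numVisits) : S.HasBackEdge S.numTraces := by
  have := Nat.find_spec (⟨S.numVisits, Or.inl le_rfl⟩ : ∃ s, S.numVisits ≤ s ∨ S.HasBackEdge s)
  exact this.resolve_left (not_le.2 h)

variable (S)

def backEdge (h : S.numTraces < S.numVisits) : ℕ × ℕ :=
  (hasBackEdge_numTraces h).choose

/-- After the followed traces, loop on the backward edge of trace `numTraces` if there is one;
this never reaches a target first visited later. Otherwise keep avoiding the safe players'
targets. -/
def tailSucc (v : V) : V :=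
  if h : S.numTraces < S.numVisits then
    if v = S.trace S.numTraces (S.backEdge h).1 then S.trace S.numTraces (S.backEdge h).2
    else S.traceSucc S.numTraces v
  else S.avoidSucc v

def tailRegion : Set V :=
  if h : S.numTraces < S.numVisits then {v | ∃ m ≤ (S.backEdge h).1, S.trace S.numTraces m = v}
  else S.avoidRegion

def tailStart : V := S.play (S.visitPos S.numTraces)

variable {S}

lemma backEdge_spec (h : S.numTraces < S.numVisits) :
    (S.backEdge h).2 ≤ (S.backEdge h).1 ∧ (S.backEdge h).1 < S.traceLen S.numTraces ∧
      S.A.E (S.trace S.numTraces (S.backEdge h).1) (S.trace S.numTraces (S.backEdge h).2) :=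
  (hasBackEdge_numTraces h).choose_spec

lemma tailSucc_spec (v : V) : S.A.E v (S.tailSucc v) := by
  unfold tailSucc; split_ifs with h hv
  · exact hv ▸ (backEdge_spec h).2.2
  · exact traceSucc_spec _ v
  · exact avoidSucc_spec S v

lemma tailStart_mem : S.tailStart ∈ S.tailRegion := by
  unfold tailRegion tailStart; split
  · exact ⟨0, Nat.zero_le _, trace_zero _⟩
  · exact S.play_mem_avoidRegion _

lemma tailSucc_mem {v : V} (hv : v ∈ S.tailRegion) : S.tailSucc v ∈ S.tailRegion := by
  by_cases h : S.numTraces < S.numVisits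
  · simp only [tailRegion, tailSucc, dif_pos h] at hv ⊢
    obtain ⟨m, hm, rfl⟩ := hv
    split_ifs with heq
    · exact ⟨_, (backEdge_spec h).1, rfl⟩
    · have hlt : m < (S.backEdge h).1 := hm.lt_of_ne fun h' => heq (h' ▸ rfl)
      rw [traceSucc_trace (hlt.trans (backEdge_spec h).2.1)]
      exact ⟨m + 1, hlt, rfl⟩
  · simp only [tailRegion, tailSucc, dif_neg h] at hv ⊢
    exact avoidSucc_mem S hv

lemma iterate_tailSucc_mem (u : ℕ) : S.tailSucc^[u] S.tailStart ∈ S.tailRegion := by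
  induction u with
  | zero => exact tailStart_mem
  | succ u ih => rw [Function.iterate_succ_apply']; exact tailSucc_mem ih

lemma notMem_safeTargets_of_mem_tailRegion {v : V} (hv : v ∈ S.tailRegion) : v ∉ S.safeTargets := by
  unfold tailRegion at hv; split at hv
  · next h =>
    obtain ⟨m, hm, rfl⟩ := hv
    exact trace_notMem_safeTargets h (hm.trans (backEdge_spec h).2.1.le)
  · exact S.notMem_safeTargets_of_mem_avoidRegion hv

lemma exists_play_eq_of_mem_tailRegion (h : S.numTraces < S.numVisits) {v : V}
    (hv : v ∈ S.tailRegion) : ∃ k < S.visitPos (S.numTraces + 1), v = S.play k := by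
  rw [tailRegion, dif_pos h] at hv
  obtain ⟨m, hm, rfl⟩ := hv
  obtain ⟨k, hk, h'⟩ := exists_trace_eq_play_of_lt h (hm.trans_lt (backEdge_spec h).2.1)
  exact ⟨k, hk, h'⟩

variable (S)

/-- Memory of the new strategies: a phase (following trace `s < numTraces`, the tail phase
`numTraces`, or the punishing phase `numTraces + 1`) and the losing player who moved last. -/
abbrev Memory : Type := Fin (S.numTraces + 2) × S.Losing

def traceSet (s : ℕ) : Set V := {v | ∃ m ≤ S.traceLen s, S.trace s m = v}

def recordOwner (v : V) (o : S.Losing) : S.Losing :=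
  if h : S.A.owner v ∉ S.safe then ⟨_, h⟩ else o

def memUpdate (μ : S.Memory) (v : V) : S.Memory :=
  if h : (μ.1 : ℕ) < S.numTraces then
    if v ∉ S.traceSet μ.1 then (Fin.last _, μ.2)
    else if v = S.trace μ.1 (S.traceLen μ.1) then (⟨μ.1 + 1, by omega⟩, S.recordOwner v μ.2)
    else (μ.1, S.recordOwner v μ.2)
  else μ

def memAct (μ : S.Memory) (v : V) : V :=
  if (μ.1 : ℕ) < S.numTraces then S.traceSucc μ.1 v
  else if (μ.1 : ℕ) = S.numTraces then S.tailSucc v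
  else attrSucc S.A μ.2.1 (S.T μ.2.1) v

lemma memAct_spec (μ : S.Memory) (v : V) : S.A.E v (S.memAct μ v) := by
  unfold memAct; split_ifs
  · exact traceSucc_spec _ v
  · exact tailSucc_spec v
  · exact attrSucc_spec v

def machine (o₀ : S.Losing) : Mealy S.A S.Memory :=
  Mealy.ofAct (0, o₀) S.memUpdate S.memAct S.memAct_spec

def strategy (o₀ : S.Losing) : S.A.Strategy := (S.machine o₀).strategy

def newPlay (o₀ : S.Losing) : ℕ → V := outcome S.A (fun _ => S.strategy o₀) S.v0

variable {S}

lemma recordOwner_eq {v : V} {i : Fin n} (hv : S.A.owner v = i) (hi : i ∉ S.safe)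
    (o : S.Losing) : (S.recordOwner v o).1 = i := by
  rw [recordOwner, dif_pos (hv ▸ hi)]; exact hv

lemma memUpdate_trace_of_lt {μ : S.Memory} {s p : ℕ} (hμ : (μ.1 : ℕ) = s)
    (hs : s < S.numTraces) (hp : p < S.traceLen s) :
    ((S.memUpdate μ (S.trace s p)).1 : ℕ) = s ∧
      (S.memUpdate μ (S.trace s p)).2 = S.recordOwner (S.trace s p) μ.2 := by
  subst hμ
  rw [memUpdate, dif_pos hs, if_neg (not_not.2 ⟨p, hp.le, rfl⟩),
    if_neg fun h => hp.ne (trace_injOn hp.le le_rfl h)]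
  exact ⟨rfl, rfl⟩

lemma memUpdate_trace_traceLen {μ : S.Memory} {s : ℕ} (hμ : (μ.1 : ℕ) = s)
    (hs : s < S.numTraces) :
    ((S.memUpdate μ (S.trace s (S.traceLen s))).1 : ℕ) = s + 1 ∧
      (S.memUpdate μ (S.trace s (S.traceLen s))).2 =
        S.recordOwner (S.trace s (S.traceLen s)) μ.2 := by
  subst hμ
  rw [memUpdate, dif_pos hs, if_neg (not_not.2 ⟨_, le_rfl, rfl⟩), if_pos rfl]
  exact ⟨rfl, rfl⟩

lemma memUpdate_of_notMem {μ : S.Memory} (hs : (μ.1 : ℕ) < S.numTraces) {v : V}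
    (hv : v ∉ S.traceSet μ.1) : S.memUpdate μ v = (Fin.last _, μ.2) := by
  rw [memUpdate, dif_pos hs, if_pos hv]

lemma memUpdate_of_le {μ : S.Memory} (hs : S.numTraces ≤ μ.1) (v : V) : S.memUpdate μ v = μ := by
  rw [memUpdate, dif_neg (not_lt.2 hs)]

lemma memAct_of_lt {μ : S.Memory} (hs : (μ.1 : ℕ) < S.numTraces) (v : V) :
    S.memAct μ v = S.traceSucc μ.1 v := if_pos hs

lemma memAct_of_eq {μ : S.Memory} (hs : (μ.1 : ℕ) = S.numTraces) (v : V) :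
    S.memAct μ v = S.tailSucc v := by
  rw [memAct, if_neg hs.not_lt, if_pos hs]

lemma memAct_last (o : S.Losing) (v : V) :
    S.memAct (Fin.last _, o) v = attrSucc S.A o.1 (S.T o.1) v := by
  rw [memAct, if_neg (by simp), if_neg (by simp)]

lemma strategy_next (o₀ : S.Losing) (ρ : ℕ → V) (t : ℕ) :
    (S.strategy o₀).next (pref ρ t) (ρ t) = S.memAct ((S.machine o₀).state ρ (t + 1)) (ρ t) := by
  rw [strategy, Mealy.strategy_next_pref, Mealy.state_succ]; rfl

lemma machine_state_succ (o₀ : S.Losing) (ρ : ℕ → V) (t : ℕ) :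
    (S.machine o₀).state ρ (t + 1) = S.memUpdate ((S.machine o₀).state ρ t) (ρ t) :=
  Mealy.state_succ _ _ _

lemma machine_state_one (o₀ : S.Losing) (ρ : ℕ → V) :
    (S.machine o₀).state ρ 1 = S.memUpdate (0, o₀) (ρ 0) :=
  machine_state_succ o₀ ρ 0

lemma newPlay_succ (o₀ : S.Losing) (t : ℕ) :
    S.newPlay o₀ (t + 1) =
      S.memAct ((S.machine o₀).state (S.newPlay o₀) (t + 1)) (S.newPlay o₀ t) :=
  (outcome_succ _ _ _).trans (strategy_next o₀ _ t)

lemma newPlay_spec (o₀ : S.Losing) (t : ℕ) :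
    (∃ s < S.numTraces, ∃ p < S.traceLen s, S.newPlay o₀ t = S.trace s p ∧
        ((S.machine o₀).state (S.newPlay o₀) (t + 1)).1 = (s : ℕ)) ∨
      (((S.machine o₀).state (S.newPlay o₀) (t + 1)).1 = S.numTraces ∧
        ∃ u, S.newPlay o₀ t = S.tailSucc^[u] S.tailStart) := by
  have hrK := numTraces_le (S := S)
  induction t with
  | zero =>
    have hv0 : S.newPlay o₀ 0 = S.trace 0 0 := by simp [newPlay, play]
    rw [machine_state_one, hv0]
    rcases Nat.eq_zero_or_pos S.numTraces with h0 | hpos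
    · refine Or.inr ⟨by rw [memUpdate_of_le (by simp [h0])]; simp [h0], 0, ?_⟩
      simp [tailStart, h0]
    · have hL := traceLen_pos (S := S) (s := 0) (by omega)
      exact Or.inl ⟨0, hpos, 0, hL, rfl,
        (memUpdate_trace_of_lt (μ := (0, o₀)) (s := 0) rfl hpos hL).1⟩
  | succ t ih =>
    rw [machine_state_succ o₀ _ (t + 1), newPlay_succ]
    set μ := (S.machine o₀).state (S.newPlay o₀) (t + 1)
    rcases ih with ⟨s, hs, p, hp, hcur, hμ⟩ | ⟨hμ, u, hcur⟩
    · have hsK : s < S.numVisits := by omega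
      rw [hcur, memAct_of_lt (hμ ▸ hs), hμ, traceSucc_trace hp]
      rcases (show p + 1 ≤ S.traceLen s from hp).lt_or_eq with hp' | hp'
      · exact Or.inl ⟨s, hs, p + 1, hp', rfl, (memUpdate_trace_of_lt hμ hs hp').1⟩
      · have hend := (memUpdate_trace_traceLen hμ hs).1
        rw [← hp'] at hend
        rw [hend]
        rcases (show s + 1 ≤ S.numTraces from hs).lt_or_eq with hs' | hs'
        · refine Or.inl ⟨s + 1, hs', 0, traceLen_pos (by omega), ?_, rfl⟩
          rw [hp', trace_traceLen_eq_trace_succ_zero hsK]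
        · refine Or.inr ⟨hs', 0, ?_⟩
          rw [hp', trace_traceLen hsK, tailStart, ← hs']
          rfl
    · rw [memAct_of_eq hμ, memUpdate_of_le hμ.ge, hcur, ← Function.iterate_succ_apply' S.tailSucc]
      exact Or.inr ⟨hμ, u + 1, rfl⟩

lemma newPlay_notMem_safeTargets (o₀ : S.Losing) (t : ℕ) :
    S.newPlay o₀ t ∉ S.safeTargets := by
  rcases newPlay_spec o₀ t with ⟨s, hs, p, hp, hcur, -⟩ | ⟨-, u, hcur⟩
  · rw [hcur]
    exact trace_notMem_safeTargets (hs.trans_le numTraces_le) hp.le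
  · rw [hcur]
    exact notMem_safeTargets_of_mem_tailRegion (iterate_tailSucc_mem u)

lemma safe_subset_satSafe_newPlay (o₀ : S.Losing) : S.safe ⊆ satSafe S.T (S.newPlay o₀) :=
  fun j hj t ht => newPlay_notMem_safeTargets o₀ t ⟨j, hj, ht⟩

/-- When `newPlay` ends in a loop, it only uses vertices that `play` visits before
`visitPos (numTraces + 1)`. -/
lemma exists_visitPos_eq_firstVisit_of_newPlay_mem (o₀ : S.Losing) {i : Fin n}
    (hi : i ∉ S.safe) {t : ℕ} (ht : S.newPlay o₀ t ∈ S.T i) :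
    ∃ s ≤ S.numTraces, S.visitPos s = S.firstVisit i := by
  obtain ⟨s, hsK, hs⟩ := exists_visitPos_eq_firstVisit hi
  refine ⟨s, ?_, hs⟩
  by_contra! hlt
  have hloop : S.numTraces < S.numVisits := hlt.trans_le hsK
  have hbound : ∃ k < S.visitPos (S.numTraces + 1), S.newPlay o₀ t = S.play k := by
    rcases newPlay_spec o₀ t with ⟨s', hs', p, hp, hcur, -⟩ | ⟨-, u, hcur⟩
    · obtain ⟨k, hk, h⟩ := exists_trace_eq_play_of_lt (hs'.trans hloop) hp
      exact ⟨k, hk.trans_le (visitPos_mono (by omega) (by omega)), hcur.trans h⟩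
    · exact hcur ▸ exists_play_eq_of_mem_tailRegion hloop (iterate_tailSucc_mem u)
  obtain ⟨k, hk, heq⟩ := hbound
  have := firstVisit_le (heq ▸ ht)
  have := visitPos_mono (S := S) (show S.numTraces + 1 ≤ s by omega) hsK
  omega

variable (S) in
def traceOffset (s : ℕ) : ℕ := ∑ j ∈ Finset.range s, S.traceLen j

lemma traceOffset_succ (s : ℕ) : S.traceOffset (s + 1) = S.traceOffset s + S.traceLen s :=
  Finset.sum_range_succ _ _

lemma traceOffset_mono {s s' : ℕ} (h : s ≤ s') : S.traceOffset s ≤ S.traceOffset s' :=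
  Finset.sum_le_sum_of_subset (Finset.range_mono h)

lemma trace_mem_attractor (hNE : S.A.IsNEObj (fun i => SafeObj (S.T i)) S.σ S.v0) {i : Fin n}
    (hi : i ∉ S.safe) {m : ℕ} (hm : m ≤ S.numVisits) (hfirst : S.visitPos m = S.firstVisit i)
    {s p : ℕ} (hs : s < m) (hp : p ≤ S.traceLen s) :
    S.trace s p ∈ attractor S.A i (S.T i) := by
  obtain ⟨k, -, hk, h⟩ := exists_trace_eq_play (hs.trans_le hm) hp
  have hkfirst : k ≤ S.firstVisit i := hfirst ▸ hk.trans (visitPos_mono hs hm)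
  rw [h]
  exact hNE.outcome_mem_attractor hi fun t ht => play_notMem_of_lt_firstVisit (by omega)

section Deviation

variable (o₀ : S.Losing) (i : Fin n) (τ : S.A.Strategy)

variable (S) in
def deviation : ℕ → V :=
  outcome S.A (Function.update (fun _ => S.strategy o₀) i τ) S.v0

variable {o₀ i τ}

lemma deviation_succ_of_owner_ne {t : ℕ} (h : S.A.owner (S.deviation o₀ i τ t) ≠ i) :
    S.deviation o₀ i τ (t + 1) =
      S.memAct ((S.machine o₀).state (S.deviation o₀ i τ) (t + 1)) (S.deviation o₀ i τ t) :=
  (outcome_update_succ_of_owner_ne h).trans (strategy_next o₀ _ t)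

lemma exists_deviation_mem_of_punish {t : ℕ} {o : S.Losing} (ho : o.1 = i)
    (hμ : (S.machine o₀).state (S.deviation o₀ i τ) (t + 1) = (Fin.last _, o))
    (hA : S.deviation o₀ i τ t ∈ attractor S.A i (S.T i)) :
    ∃ t', S.deviation o₀ i τ t' ∈ S.T i := by
  have hfrozen : ∀ t', t ≤ t' →
      (S.machine o₀).state (S.deviation o₀ i τ) (t' + 1) = (Fin.last _, o) := by
    intro t' ht'
    induction t', ht' using Nat.le_induction with
    | base => exact hμ
    | succ t' _ ih => rw [machine_state_succ, ih, memUpdate_of_le (by simp)]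
  refine exists_mem_of_attrSucc (isPlay_outcome _ _) hA fun t' ht' hown => ?_
  rw [deviation_succ_of_owner_ne hown, hfrozen t' ht', memAct_last, ho]

variable (S o₀ i τ) in
/-- `state _ (t + 1)` is the memory after reading the vertex at time `t`. -/
def Following (m t s p : ℕ) : Prop :=
  s < m ∧ p < S.traceLen s ∧ S.deviation o₀ i τ t = S.trace s p ∧
    (((S.machine o₀).state (S.deviation o₀ i τ) (t + 1)).1 : ℕ) = s ∧
    (S.A.owner (S.deviation o₀ i τ t) = i →
      ((S.machine o₀).state (S.deviation o₀ i τ) (t + 1)).2.1 = i)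

variable {m : ℕ}

lemma following_zero (hi : i ∉ S.safe) (hm : 0 < m) (hmr : m ≤ S.numTraces) :
    S.Following o₀ i τ m 0 0 0 := by
  have hL := traceLen_pos (S := S) (s := 0) (by have := numTraces_le (S := S); omega)
  have hv0 : S.deviation o₀ i τ 0 = S.trace 0 0 := by simp [deviation, play]
  have hupd := memUpdate_trace_of_lt (μ := (0, o₀)) (s := 0) rfl (by omega) hL
  refine ⟨hm, hL, hv0, ?_, fun hown => ?_⟩ <;> rw [machine_state_one, hv0]
  · exact hupd.1
  · rw [hupd.2]; exact recordOwner_eq (hv0 ▸ hown) hi _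

lemma traceOffset_add_lt_of_following {t s p : ℕ} (h : S.Following o₀ i τ m t s p) :
    S.traceOffset s + p < S.traceOffset m := by
  have := traceOffset_mono (S := S) (show s + 1 ≤ m from h.1)
  rw [traceOffset_succ] at this
  have := h.2.1
  omega

lemma following_succ_of_forward (hi : i ∉ S.safe) (hmr : m ≤ S.numTraces)
    (hfirst : S.visitPos m = S.firstVisit i) {t s p p' : ℕ} (h : S.Following o₀ i τ m t s p)
    (hpp' : p < p') (hp' : p' ≤ S.traceLen s)
    (hnext : S.deviation o₀ i τ (t + 1) = S.trace s p') :
    S.deviation o₀ i τ (t + 1) ∈ S.T i ∨ ∃ s' p'', S.Following o₀ i τ m (t + 1) s' p'' ∧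
      S.traceOffset s + p < S.traceOffset s' + p'' := by
  obtain ⟨hsm, -, -, hμ, -⟩ := h
  have hsr : s < S.numTraces := hsm.trans_le hmr
  have hsK : s < S.numVisits := hsr.trans_le numTraces_le
  have howner (x : S.Losing) (hx : S.A.owner (S.deviation o₀ i τ (t + 1)) = i) :
      (S.recordOwner (S.deviation o₀ i τ (t + 1)) x).1 = i := recordOwner_eq hx hi x
  rcases hp'.lt_or_eq with hlt | rfl
  · have hupd := memUpdate_trace_of_lt (μ := (S.machine o₀).state _ (t + 1)) hμ hsr hlt
    rw [← hnext, ← machine_state_succ] at hupd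
    exact Or.inr ⟨s, p', ⟨hsm, hlt, hnext, hupd.1, fun hown => hupd.2 ▸ howner _ hown⟩,
      by omega⟩
  rcases (show s + 1 ≤ m from hsm).lt_or_eq with hsm' | hsm'
  · have hupd := memUpdate_trace_traceLen (μ := (S.machine o₀).state _ (t + 1)) hμ hsr
    rw [← hnext, ← machine_state_succ] at hupd
    have hK := numTraces_le (S := S)
    refine Or.inr ⟨s + 1, 0, ⟨hsm', traceLen_pos (S := S) (s := s + 1) (by omega), ?_, hupd.1,
      fun hown => hupd.2 ▸ howner _ hown⟩, by rw [traceOffset_succ]; omega⟩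
    rw [hnext, trace_traceLen_eq_trace_succ_zero hsK]
  · left
    rw [hnext, trace_traceLen hsK, hsm', hfirst]
    exact play_firstVisit_mem hi

/-- The other players move forward along the trace; `i` cannot move backward on a trace without
backward edges, and a move of `i` off the trace is punished. -/
lemma following_step (hNE : S.A.IsNEObj (fun i => SafeObj (S.T i)) S.σ S.v0) (hi : i ∉ S.safe)
    (hmr : m ≤ S.numTraces) (hfirst : S.visitPos m = S.firstVisit i) {t s p : ℕ}
    (h : S.Following o₀ i τ m t s p) :
    (∃ t', S.deviation o₀ i τ t' ∈ S.T i) ∨ ∃ s' p', S.Following o₀ i τ m (t + 1) s' p' ∧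
      S.traceOffset s + p < S.traceOffset s' + p' := by
  obtain ⟨hsm, hp, hcur, hμ, hrec⟩ := id h
  have hsr : s < S.numTraces := hsm.trans_le hmr
  have hmK : m ≤ S.numVisits := hmr.trans numTraces_le
  suffices (∃ t', S.deviation o₀ i τ t' ∈ S.T i) ∨
      ∃ p', p < p' ∧ p' ≤ S.traceLen s ∧ S.deviation o₀ i τ (t + 1) = S.trace s p' by
    obtain hT | ⟨p', hpp', hp', hnext⟩ := this
    · exact Or.inl hT
    · exact (following_succ_of_forward hi hmr hfirst h hpp' hp' hnext).imp_left
        fun hT => ⟨_, hT⟩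
  by_cases hown : S.A.owner (S.deviation o₀ i τ t) = i
  swap
  · rw [deviation_succ_of_owner_ne hown, memAct_of_lt (hμ ▸ hsr), hμ, hcur, traceSucc_trace hp]
    exact Or.inr ⟨p + 1, p.lt_add_one, hp, rfl⟩
  by_cases hT : S.deviation o₀ i τ t ∈ S.T i
  · exact Or.inl ⟨t, hT⟩
  have hA := trace_mem_attractor hNE hi hmK hfirst hsm hp.le
  rw [← hcur] at hA
  have hA' := mem_attractor_of_owner_eq hA hT hown (isPlay_outcome _ _ t)
  by_cases hon : S.deviation o₀ i τ (t + 1) ∈ S.traceSet s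
  · obtain ⟨p', hp', hnext⟩ := hon
    refine Or.inr ⟨p', not_le.1 fun hle => not_hasBackEdge hsr ⟨(p, p'), hle, hp, ?_⟩,
      hp', hnext.symm⟩
    exact hcur ▸ hnext ▸ isPlay_outcome _ _ t
  · refine Or.inl (exists_deviation_mem_of_punish (hrec hown) ?_ hA')
    rw [machine_state_succ, memUpdate_of_notMem (hμ ▸ hsr) (hμ ▸ hon)]

/-- The position `traceOffset s + p` on the concatenated traces increases and stays below
`traceOffset m`. -/
theorem exists_deviation_mem (hNE : S.A.IsNEObj (fun i => SafeObj (S.T i)) S.σ S.v0)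
    (hi : i ∉ S.safe) (hm : 0 < m) (hmr : m ≤ S.numTraces)
    (hfirst : S.visitPos m = S.firstVisit i) : ∃ t, S.deviation o₀ i τ t ∈ S.T i :=
  exists_of_bounded_progress (P := fun x : ℕ × ℕ × ℕ => S.Following o₀ i τ m x.1 x.2.1 x.2.2)
    (fun x => S.traceOffset x.2.1 + x.2.2) (S.traceOffset m) ⟨(0, 0, 0), following_zero hi hm hmr⟩
    (fun x hx => (following_step hNE hi hmr hfirst hx).imp_right
      fun ⟨s', p', h, hlt⟩ => ⟨(x.1 + 1, s', p'), h, hlt⟩)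
    fun _ hx => traceOffset_add_lt_of_following hx

end Deviation

variable (S)

theorem isNEObj_strategy (hNE : S.A.IsNEObj (fun i => SafeObj (S.T i)) S.σ S.v0)
    (o₀ : S.Losing) :
    S.A.IsNEObj (fun i => SafeObj (S.T i)) (fun _ => S.strategy o₀) S.v0 := by
  intro i τ hdev t ht
  have hi : i ∉ S.safe := fun hs => newPlay_notMem_safeTargets o₀ t ⟨i, hs, ht⟩
  obtain ⟨m, hmr, hfirst⟩ := exists_visitPos_eq_firstVisit_of_newPlay_mem o₀ hi ht
  rcases Nat.eq_zero_or_pos m with rfl | hm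
  · have hv0 := play_firstVisit_mem hi
    rw [← hfirst, visitPos_zero] at hv0
    exact hdev 0 hv0
  · obtain ⟨t', ht'⟩ := exists_deviation_mem (o₀ := o₀) (τ := τ) hNE hi hm hmr hfirst
    exact hdev t' ht'

lemma card_memory : Nat.card S.Memory = (S.numTraces + 2) * (n - S.safe.ncard) := by
  have hcompl := Set.ncard_compl S.safe
  rw [Nat.card_fin] at hcompl
  rw [Nat.card_prod, Nat.card_fin, ← hcompl]
  rfl

lemma hasMemorySize_strategy (o₀ : S.Losing) :
    HasMemorySize (S.strategy o₀) ((S.numTraces + 2) * (n - S.safe.ncard)) :=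
  Mealy.hasMemorySize_strategy _ S.card_memory.le

theorem exists_memoryless_ne (h : IsEmpty S.Losing) :
    ∃ σ : Fin n → S.A.Strategy, S.A.IsNEObj (fun i => SafeObj (S.T i)) σ S.v0 ∧
      S.safe ⊆ satSafe S.T (outcome S.A σ S.v0) ∧ ∀ i, HasMemorySize (σ i) 1 := by
  have hsafe (j : Fin n) : j ∈ S.safe := by_contra fun hj => h.false ⟨j, hj⟩
  have hout (t : ℕ) : outcome S.A (fun _ => Strategy.ofFun _ S.avoidSucc_spec) S.v0 t ∉
      S.safeTargets := by
    rw [outcome_ofFun]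
    refine S.notMem_safeTargets_of_mem_avoidRegion ?_
    induction t with
    | zero => exact S.play_mem_avoidRegion 0
    | succ t ih => rw [Function.iterate_succ_apply']; exact S.avoidSucc_mem ih
  exact ⟨fun _ => Strategy.ofFun _ S.avoidSucc_spec,
    fun i _ _ t ht => hout t ⟨i, hsafe i, ht⟩, fun j hj t ht => hout t ⟨j, hj, ht⟩,
    fun _ => hasMemorySize_ofFun _ _ le_rfl⟩

end Setting

end SafetyFM

end

/-- From any NE in a safety game one can derive a finite-memory NE
whose outcome satisfies at least the same safety objectives; memory size at most
`max 1 (n − |Sat|) * (|Visit ∖ {0}| + 2)`, in particular at most `n² + 2n`. -/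
theorem safety_fm_ne
    (V : Type) (n : ℕ) (A : Arena V n) (T : Fin n → Set V) (v0 : V)
    (σ' : Fin n → A.Strategy)
    (hNE : A.IsNEObj (fun i => SafeObj (T i)) σ' v0) :
    ∃ σ : Fin n → A.Strategy,
      A.IsNEObj (fun i => SafeObj (T i)) σ v0 ∧
      satSafe T (outcome A σ' v0) ⊆ satSafe T (outcome A σ v0) ∧
      ∀ i, HasMemorySize (σ i)
          (max 1 (n - (satSafe T (outcome A σ' v0)).ncard) *
            ((visitSet T (outcome A σ' v0) \ {0}).ncard + 2)) ∧
        HasMemorySize (σ i) (n ^ 2 + 2 * n) := by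
  let S : SafetyFM.Setting V n := ⟨A, T, v0, σ'⟩
  rcases isEmpty_or_nonempty S.Losing with hempty | hne
  · obtain ⟨σ, hσ, hsafe, hmem⟩ := S.exists_memoryless_ne hempty
    refine ⟨σ, hσ, hsafe, fun i => ⟨(hmem i).mono ?_, (hmem i).mono ?_⟩⟩
    · exact Nat.mul_le_mul (le_max_left 1 _) (Nat.le_add_left 1 _)
    · have := i.pos; nlinarith
  · obtain ⟨o₀⟩ := hne
    have hrK : S.numTraces ≤ S.numVisits := SafetyFM.Setting.numTraces_le
    have hKn : S.numVisits ≤ n := S.numVisits_le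
    refine ⟨fun _ => S.strategy o₀, S.isNEObj_strategy hNE o₀, S.safe_subset_satSafe_newPlay o₀,
      fun _ => ⟨(S.hasMemorySize_strategy o₀).mono ?_, (S.hasMemorySize_strategy o₀).mono ?_⟩⟩
    · rw [mul_comm]
      exact Nat.mul_le_mul (le_max_right _ _) (Nat.add_le_add_right hrK 2)
    · calc (S.numTraces + 2) * (n - S.safe.ncard) ≤ (n + 2) * n :=
            Nat.mul_le_mul (by omega) (Nat.sub_le _ _)
        _ = n ^ 2 + 2 * n := by ring
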